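/- arXiv:2006.13271 — 2 statements merged into one kernel-verified Lean document; each statement's English description precedes it below -/
import Mathlib

section
/- The A-linear map A → F sending a to a·(e − f) is injective; the A-linear map F → M determined on generators by e ↦ s₀, dθ₁ ↦ s₁, dθ₂ ↦ s₂, f ↦ s₀ is well defined and surjective; and its kernel is exactly the cyclic submodule A·(e − f). In particular there is a short exact sequence of A-modules 0 → A → F → M → 0. -/
open MvPolynomial

noncomputable section

/-- The polynomial ring `ℂ[t,z₁,z₂,θ₁,θ₂]`:
variables `X 0 = t`, `X 1 = z₁`, `X 2 = z₂`, `X 3 = θ₁`, `X 4 = θ₂`. -/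
abbrev P5 : Type := MvPolynomial (Fin 5) ℂ

/-- The ideal `(z₁z₂ + t², z₁θ₂ − tθ₁, z₂θ₁ + tθ₂, θ₁θ₂, θ₁², θ₂²)` of relations
of Deligne's miniversal deformation of the NS node. -/
def nsIdeal : Ideal P5 :=
  Ideal.span {X 1 * X 2 + X 0 ^ 2, X 1 * X 4 - X 0 * X 3, X 2 * X 3 + X 0 * X 4,
    X 3 * X 4, X 3 ^ 2, X 4 ^ 2}

/-- The coordinate ring `A` of Deligne's miniversal deformation of the NS node. -/
abbrev ANode : Type := P5 ⧸ nsIdeal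

/-- `t̄ ∈ A`. -/
def tb : ANode := Ideal.Quotient.mk nsIdeal (X 0)
/-- `z̄₁ ∈ A`. -/
def z1 : ANode := Ideal.Quotient.mk nsIdeal (X 1)
/-- `z̄₂ ∈ A`. -/
def z2 : ANode := Ideal.Quotient.mk nsIdeal (X 2)
/-- `θ̄₁ ∈ A`. -/
def th1 : ANode := Ideal.Quotient.mk nsIdeal (X 3)
/-- `θ̄₂ ∈ A`. -/
def th2 : ANode := Ideal.Quotient.mk nsIdeal (X 4)

/-- `A` as a `ℂ[t]`-algebra via `t ↦ t̄`. -/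
instance : Algebra (Polynomial ℂ) ANode := (Polynomial.aeval tb).toRingHom.toAlgebra


set_option synthInstance.maxHeartbeats 400000
set_option maxHeartbeats 1000000

/-- The standard generators of the free module `A³`. -/
def ee (i : Fin 3) : Fin 3 → ANode := Pi.single i 1

/-- The relation vectors defining the local model `M` of the dualizing sheaf `ω_{X/S}`:
generators `s₁ = ee 0`, `s₂ = ee 1`, `s₀ = ee 2`; relations `z₁s₂ = ts₁`, `z₂s₁ = −ts₂`,
`θ₁s₂ = ts₀`, `θ₂s₁ = ts₀`, `z₁s₀ = θ₁s₁`, `z₂s₀ = −θ₂s₂`, `θ₁s₀ = 0`, `θ₂s₀ = 0`. -/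
def omegaRels : Set (Fin 3 → ANode) :=
  { z1 • ee 1 - tb • ee 0,
    z2 • ee 0 + tb • ee 1,
    th1 • ee 1 - tb • ee 2,
    th2 • ee 0 - tb • ee 2,
    z1 • ee 2 - th1 • ee 0,
    z2 • ee 2 + th2 • ee 1,
    th1 • ee 2,
    th2 • ee 2 }

/-- The submodule of relations. -/
def omegaRelMod : Submodule ANode (Fin 3 → ANode) := Submodule.span ANode omegaRels

/-- The local model `M` of the relative dualizing sheaf `ω_{X/S}`. -/
abbrev M : Type := (Fin 3 → ANode) ⧸ omegaRelMod

/-- The generators of `M`: `s 0 = s₁`, `s 1 = s₂`, `s 2 = s₀`. -/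
def s (i : Fin 3) : M := Submodule.Quotient.mk (ee i)

/-- The standard generators of the free module `A⁴`. -/
def ff (i : Fin 4) : Fin 4 → ANode := Pi.single i 1

/-- The relation vectors defining the local model `F` of `j_*Ω_{U/S}`:
generators `e = ff 0`, `dθ₁ = ff 1`, `dθ₂ = ff 2`, `f = ff 3`; relations
`t·dθ₁ − z₁·dθ₂ = tθ₁·e`, `z₂·dθ₁ + t·dθ₂ = −tθ₂·e`, `t·f = θ₂·dθ₁`,
`θ₂·dθ₁ = θ₁·dθ₂`, `z₁·f = θ₁·dθ₁`, `z₂·f = −θ₂·dθ₂`, `θ₁·f = 0`, `θ₂·f = 0`. -/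
def fRels : Set (Fin 4 → ANode) :=
  { tb • ff 1 - z1 • ff 2 - (tb * th1) • ff 0,
    z2 • ff 1 + tb • ff 2 + (tb * th2) • ff 0,
    tb • ff 3 - th2 • ff 1,
    th2 • ff 1 - th1 • ff 2,
    z1 • ff 3 - th1 • ff 1,
    z2 • ff 3 + th2 • ff 2,
    th1 • ff 3,
    th2 • ff 3 }

/-- The submodule of relations for `F`. -/
def fRelMod : Submodule ANode (Fin 4 → ANode) := Submodule.span ANode fRels

/-- The local model `F` of `j_*Ω_{U/S}`. -/
abbrev F : Type := (Fin 4 → ANode) ⧸ fRelMod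

/-- The generators of `F`: `g 0 = e`, `g 1 = dθ₁`, `g 2 = dθ₂`, `g 3 = f`. -/
def g (i : Fin 4) : F := Submodule.Quotient.mk (ff i)

/-! ### Auxiliary lemmas -/

private lemma mkz {p : P5} (h : p ∈ nsIdeal) : Ideal.Quotient.mk nsIdeal p = 0 :=
  Ideal.Quotient.eq_zero_iff_mem.mpr h

lemma rel_z2th1 : z2 * th1 = -(tb * th2) := by
  have h : Ideal.Quotient.mk nsIdeal (X 2 * X 3 + X 0 * X 4) = 0 :=
    mkz (Ideal.subset_span (by
      simp only [Set.mem_insert_iff, Set.mem_singleton_iff]; tauto))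
  have h2 : z2 * th1 + tb * th2 = 0 := by
    simpa [z2, th1, tb, th2] using h
  linear_combination h2

lemma rel_th1th2 : th1 * th2 = 0 := by
  have h : Ideal.Quotient.mk nsIdeal (X 3 * X 4) = 0 :=
    mkz (Ideal.subset_span (by
      simp only [Set.mem_insert_iff, Set.mem_singleton_iff]; tauto))
  simpa [th1, th2] using h

lemma rel_th1sq : th1 * th1 = 0 := by
  have h : Ideal.Quotient.mk nsIdeal (X 3 ^ 2) = 0 :=
    mkz (Ideal.subset_span (by
      simp only [Set.mem_insert_iff, Set.mem_singleton_iff]; tauto))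
  rw [map_pow] at h
  calc th1 * th1 = (Ideal.Quotient.mk nsIdeal (X 3)) ^ 2 := by rw [sq]; rfl
    _ = 0 := h

/-- The map `A⁴ → A³` underlying `φ : F → M`. -/
def psi : (Fin 4 → ANode) →ₗ[ANode] (Fin 3 → ANode) where
  toFun v := ![v 1, v 2, v 0 + v 3]
  map_add' u v := by funext i; fin_cases i <;> simp <;> ring
  map_smul' a v := by funext i; fin_cases i <;> simp [mul_add]

/-- The splitting functional `A⁴ → A`, `v ↦ v₀ + θ₁ v₁`. -/
def rho : (Fin 4 → ANode) →ₗ[ANode] ANode where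
  toFun v := v 0 + th1 * v 1
  map_add' u v := by simp; ring
  map_smul' a v := by simp; ring

lemma psi_maps_rels : ∀ r ∈ fRels, psi r ∈ omegaRelMod := by
  have m1 : (z1 • ee 1 - tb • ee 0) ∈ omegaRelMod := Submodule.subset_span (by
    simp only [omegaRels, Set.mem_insert_iff, Set.mem_singleton_iff]; tauto)
  have m2 : (z2 • ee 0 + tb • ee 1) ∈ omegaRelMod := Submodule.subset_span (by
    simp only [omegaRels, Set.mem_insert_iff, Set.mem_singleton_iff]; tauto)
  have m3 : (th1 • ee 1 - tb • ee 2) ∈ omegaRelMod := Submodule.subset_span (by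
    simp only [omegaRels, Set.mem_insert_iff, Set.mem_singleton_iff]; tauto)
  have m4 : (th2 • ee 0 - tb • ee 2) ∈ omegaRelMod := Submodule.subset_span (by
    simp only [omegaRels, Set.mem_insert_iff, Set.mem_singleton_iff]; tauto)
  have m5 : (z1 • ee 2 - th1 • ee 0) ∈ omegaRelMod := Submodule.subset_span (by
    simp only [omegaRels, Set.mem_insert_iff, Set.mem_singleton_iff]; tauto)
  have m6 : (z2 • ee 2 + th2 • ee 1) ∈ omegaRelMod := Submodule.subset_span (by
    simp only [omegaRels, Set.mem_insert_iff, Set.mem_singleton_iff]; tauto)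
  have m7 : (th1 • ee 2) ∈ omegaRelMod := Submodule.subset_span (by
    simp only [omegaRels, Set.mem_insert_iff, Set.mem_singleton_iff]; tauto)
  have m8 : (th2 • ee 2) ∈ omegaRelMod := Submodule.subset_span (by
    simp only [omegaRels, Set.mem_insert_iff, Set.mem_singleton_iff]; tauto)
  intro r hr
  simp only [fRels, Set.mem_insert_iff, Set.mem_singleton_iff] at hr
  rcases hr with h|h|h|h|h|h|h|h <;> subst h
  · have e : psi (tb • ff 1 - z1 • ff 2 - (tb * th1) • ff 0)
        = -(z1 • ee 1 - tb • ee 0) + (-tb) • (th1 • ee 2) := by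
      funext i; fin_cases i <;> simp [psi, ff, ee, Pi.single_apply] <;> ring
    rw [e]; exact Submodule.add_mem _ (Submodule.neg_mem _ m1) (Submodule.smul_mem _ _ m7)
  · have e : psi (z2 • ff 1 + tb • ff 2 + (tb * th2) • ff 0)
        = (z2 • ee 0 + tb • ee 1) + tb • (th2 • ee 2) := by
      funext i; fin_cases i <;> simp [psi, ff, ee, Pi.single_apply] <;> ring
    rw [e]; exact Submodule.add_mem _ m2 (Submodule.smul_mem _ _ m8)
  · have e : psi (tb • ff 3 - th2 • ff 1) = -(th2 • ee 0 - tb • ee 2) := by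
      funext i; fin_cases i <;> simp [psi, ff, ee, Pi.single_apply] <;> ring
    rw [e]; exact Submodule.neg_mem _ m4
  · have e : psi (th2 • ff 1 - th1 • ff 2)
        = (th2 • ee 0 - tb • ee 2) - (th1 • ee 1 - tb • ee 2) := by
      funext i; fin_cases i <;> simp [psi, ff, ee, Pi.single_apply] <;> ring
    rw [e]; exact Submodule.sub_mem _ m4 m3
  · have e : psi (z1 • ff 3 - th1 • ff 1) = z1 • ee 2 - th1 • ee 0 := by
      funext i; fin_cases i <;> simp [psi, ff, ee, Pi.single_apply] <;> ring
    rw [e]; exact m5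
  · have e : psi (z2 • ff 3 + th2 • ff 2) = z2 • ee 2 + th2 • ee 1 := by
      funext i; fin_cases i <;> simp [psi, ff, ee, Pi.single_apply] <;> ring
    rw [e]; exact m6
  · have e : psi (th1 • ff 3) = th1 • ee 2 := by
      funext i; fin_cases i <;> simp [psi, ff, ee, Pi.single_apply]
    rw [e]; exact m7
  · have e : psi (th2 • ff 3) = th2 • ee 2 := by
      funext i; fin_cases i <;> simp [psi, ff, ee, Pi.single_apply]
    rw [e]; exact m8

/-- The induced map `φ : F → M`. -/
def phi : F →ₗ[ANode] M :=
  Submodule.liftQ fRelMod (omegaRelMod.mkQ ∘ₗ psi) (by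
    refine Submodule.span_le.mpr ?_
    intro r hr
    simp only [SetLike.mem_coe, LinearMap.mem_ker, LinearMap.comp_apply, Submodule.mkQ_apply,
      Submodule.Quotient.mk_eq_zero]
    exact psi_maps_rels r hr)

lemma phi_mk (v : Fin 4 → ANode) :
    phi (Submodule.Quotient.mk v) = Submodule.Quotient.mk (psi v) := rfl

/-- The induced functional `ρ̄ : F → A`. -/
def rhobar : F →ₗ[ANode] ANode :=
  Submodule.liftQ fRelMod rho (by
    refine Submodule.span_le.mpr ?_
    intro r hr
    simp only [SetLike.mem_coe, LinearMap.mem_ker]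
    simp only [fRels, Set.mem_insert_iff, Set.mem_singleton_iff] at hr
    rcases hr with h|h|h|h|h|h|h|h <;> subst h <;>
      simp [rho, ff, Pi.single_apply]
    · ring
    · linear_combination rel_z2th1
    · linear_combination -rel_th1th2
    · linear_combination rel_th1th2
    · linear_combination -rel_th1sq)

lemma rhobar_mk (v : Fin 4 → ANode) :
    rhobar (Submodule.Quotient.mk v) = v 0 + th1 * v 1 := rfl

lemma omega_le_map : omegaRelMod ≤ Submodule.map psi fRelMod := by
  have fm : ∀ r ∈ fRels, r ∈ fRelMod := fun r hr => Submodule.subset_span hr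
  have f1 : (tb • ff 1 - z1 • ff 2 - (tb * th1) • ff 0) ∈ fRelMod := fm _ (by
    simp only [fRels, Set.mem_insert_iff, Set.mem_singleton_iff]; tauto)
  have f2 : (z2 • ff 1 + tb • ff 2 + (tb * th2) • ff 0) ∈ fRelMod := fm _ (by
    simp only [fRels, Set.mem_insert_iff, Set.mem_singleton_iff]; tauto)
  have f3 : (tb • ff 3 - th2 • ff 1) ∈ fRelMod := fm _ (by
    simp only [fRels, Set.mem_insert_iff, Set.mem_singleton_iff]; tauto)
  have f4 : (th2 • ff 1 - th1 • ff 2) ∈ fRelMod := fm _ (by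
    simp only [fRels, Set.mem_insert_iff, Set.mem_singleton_iff]; tauto)
  have f5 : (z1 • ff 3 - th1 • ff 1) ∈ fRelMod := fm _ (by
    simp only [fRels, Set.mem_insert_iff, Set.mem_singleton_iff]; tauto)
  have f6 : (z2 • ff 3 + th2 • ff 2) ∈ fRelMod := fm _ (by
    simp only [fRels, Set.mem_insert_iff, Set.mem_singleton_iff]; tauto)
  have f7 : (th1 • ff 3) ∈ fRelMod := fm _ (by
    simp only [fRels, Set.mem_insert_iff, Set.mem_singleton_iff]; tauto)
  have f8 : (th2 • ff 3) ∈ fRelMod := fm _ (by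
    simp only [fRels, Set.mem_insert_iff, Set.mem_singleton_iff]; tauto)
  refine Submodule.span_le.mpr ?_
  intro w hw
  simp only [omegaRels, Set.mem_insert_iff, Set.mem_singleton_iff] at hw
  rcases hw with h|h|h|h|h|h|h|h <;> subst h <;> refine Set.mem_of_eq_of_mem rfl ?_
  · refine ⟨-(tb • ff 1 - z1 • ff 2 - (tb * th1) • ff 0) - tb • (th1 • ff 3),
      Submodule.sub_mem _ (Submodule.neg_mem _ f1) (Submodule.smul_mem _ _ f7), ?_⟩
    funext i; fin_cases i <;> simp [psi, ff, ee, Pi.single_apply] <;> ring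
  · refine ⟨(z2 • ff 1 + tb • ff 2 + (tb * th2) • ff 0) - tb • (th2 • ff 3),
      Submodule.sub_mem _ f2 (Submodule.smul_mem _ _ f8), ?_⟩
    funext i; fin_cases i <;> simp [psi, ff, ee, Pi.single_apply] <;> ring
  · refine ⟨-(tb • ff 3 - th2 • ff 1) - (th2 • ff 1 - th1 • ff 2),
      Submodule.sub_mem _ (Submodule.neg_mem _ f3) f4, ?_⟩
    funext i; fin_cases i <;> simp [psi, ff, ee, Pi.single_apply] <;> ring
  · refine ⟨-(tb • ff 3 - th2 • ff 1), Submodule.neg_mem _ f3, ?_⟩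
    funext i; fin_cases i <;> simp [psi, ff, ee, Pi.single_apply] <;> ring
  · refine ⟨z1 • ff 3 - th1 • ff 1, f5, ?_⟩
    funext i; fin_cases i <;> simp [psi, ff, ee, Pi.single_apply] <;> ring
  · refine ⟨z2 • ff 3 + th2 • ff 2, f6, ?_⟩
    funext i; fin_cases i <;> simp [psi, ff, ee, Pi.single_apply] <;> ring
  · refine ⟨th1 • ff 3, f7, ?_⟩
    funext i; fin_cases i <;> simp [psi, ff, ee, Pi.single_apply]
  · refine ⟨th2 • ff 3, f8, ?_⟩
    funext i; fin_cases i <;> simp [psi, ff, ee, Pi.single_apply]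

lemma phi_g0 : phi (g 0) = s 2 := by
  rw [g, phi_mk]
  congr 1
  funext i; fin_cases i <;> simp [psi, ff, ee, Pi.single_apply]

lemma phi_g1 : phi (g 1) = s 0 := by
  rw [g, phi_mk]
  congr 1
  funext i; fin_cases i <;> simp [psi, ff, ee, Pi.single_apply]

lemma phi_g2 : phi (g 2) = s 1 := by
  rw [g, phi_mk]
  congr 1
  funext i; fin_cases i <;> simp [psi, ff, ee, Pi.single_apply]

lemma phi_g3 : phi (g 3) = s 2 := by
  rw [g, phi_mk]
  congr 1
  funext i; fin_cases i <;> simp [psi, ff, ee, Pi.single_apply]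

lemma rhobar_gdiff : rhobar (g 0 - g 3) = 1 := by
  rw [g, g, ← Submodule.Quotient.mk_sub, rhobar_mk]
  simp [ff, Pi.single_apply]

/-- `a ↦ a·(e − f)` is injective `A → F`; the `A`-linear map `F → M`
with `e ↦ s₀`, `dθ₁ ↦ s₁`, `dθ₂ ↦ s₂`, `f ↦ s₀` is well defined and surjective, with
kernel exactly `A·(e − f)`; so there is a short exact sequence `0 → A → F → M → 0`. -/
theorem differentials_ses :
    Function.Injective (fun a : ANode => a • (g 0 - g 3)) ∧
    ∃ φ : F →ₗ[ANode] M,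
      φ (g 0) = s 2 ∧ φ (g 1) = s 0 ∧ φ (g 2) = s 1 ∧ φ (g 3) = s 2 ∧
      Function.Surjective φ ∧
      LinearMap.ker φ = Submodule.span ANode {g 0 - g 3} := by
  constructor
  · intro a b hab
    have h := congrArg rhobar hab
    simpa [map_smul, rhobar_gdiff, smul_eq_mul] using h
  · refine ⟨phi, phi_g0, phi_g1, phi_g2, phi_g3, ?_, ?_⟩
    · intro x
      obtain ⟨w, rfl⟩ := Submodule.Quotient.mk_surjective omegaRelMod x
      refine ⟨Submodule.Quotient.mk ![w 2, w 0, w 1, 0], ?_⟩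
      rw [phi_mk]
      congr 1
      funext i; fin_cases i <;> simp [psi]
    · apply le_antisymm
      · intro x hx
        rw [LinearMap.mem_ker] at hx
        obtain ⟨v, rfl⟩ := Submodule.Quotient.mk_surjective fRelMod x
        have hv : psi v ∈ omegaRelMod := by
          rw [phi_mk, Submodule.Quotient.mk_eq_zero] at hx
          exact hx
        obtain ⟨u, hu, huv⟩ := omega_le_map hv
        have c0 : u 1 = v 1 := by
          have := congrFun huv 0; simpa [psi] using this
        have c1 : u 2 = v 2 := by
          have := congrFun huv 1; simpa [psi] using this
        have c2 : u 0 + u 3 = v 0 + v 3 := by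
          have := congrFun huv 2; simpa [psi] using this
        have hveq : v = u + (v 0 - u 0) • (ff 0 - ff 3) := by
          funext i; fin_cases i <;> simp [ff, Pi.single_apply]
          · linear_combination -c0
          · linear_combination -c1
          · linear_combination -c2
        have : (Submodule.Quotient.mk v : F) = (v 0 - u 0) • (g 0 - g 3) := by
          conv_lhs => rw [hveq]
          rw [Submodule.Quotient.mk_add, (Submodule.Quotient.mk_eq_zero _).mpr hu,
            zero_add, Submodule.Quotient.mk_smul, Submodule.Quotient.mk_sub]
          rfl
        rw [this]
        exact Submodule.smul_mem _ _ (Submodule.mem_span_singleton_self _)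
      · refine Submodule.span_le.mpr ?_
        intro x hx
        rw [Set.mem_singleton_iff] at hx
        subst hx
        rw [SetLike.mem_coe, LinearMap.mem_ker, map_sub, phi_g0, phi_g3, sub_self]

end
end

section
/- The A-linear map μ : M → A/(z̄₁ + t̄, z̄₂ − t̄, θ̄₁ + θ̄₂) determined on generators by s₁ ↦ −t̄, s₂ ↦ t̄, s₀ ↦ θ̄₁ is well defined and annihilates the cyclic submodule A·(s₁ + s₂); the induced ℂ[t]-linear map from M/A·(s₁+s₂) to A/(z̄₁ + t̄, z̄₂ − t̄, θ̄₁ + θ̄₂) sends the basis element s̄₁ to −t·1̄ and the basis element s̄₀ to θ̄₁, i.e. with respect to the ℂ[t]-bases {s̄₁, s̄₀} of the source and {1̄, θ̄₁} of the target it is diagonal with entries (−t, 1). -/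
open MvPolynomial

noncomputable section

set_option synthInstance.maxHeartbeats 400000
set_option maxHeartbeats 1000000

/-- The ideal `(z̄₁ + t̄, z̄₂ − t̄, θ̄₁ + θ̄₂)` cutting out the subscheme `Z`. -/
def zIdeal : Ideal ANode := Ideal.span {z1 + tb, z2 - tb, th1 + th2}

/-- The coordinate ring `𝒢̂ = A/(z̄₁ + t̄, z̄₂ − t̄, θ̄₁ + θ̄₂)` of `Z`. -/
abbrev ZRing : Type := ANode ⧸ zIdeal

/-- The cyclic submodule `A·(s₁ + s₂)` of `M`. -/
def secSub : Submodule ANode M := Submodule.span ANode {s 0 + s 1}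

/-!
Modulo `zIdeal` one has `z₁ = −t`, `z₂ = t` and `θ₂ = −θ₁`. Multiplying the generators by `s₁`
and reducing gives `s₁ ↦ z₁ = −t`, `s₂ ↦ t`, `s₀ ↦ θ₁`; after these substitutions every relation
of `M` becomes a ring identity, except `θ₁s₀ = 0` and `θ₂s₀ = 0`, which map to `±θ₁²` and vanish
because `θ₁² = 0` in `A`. The image of `s₁ + s₂` is `−t + t = 0`, and `t ∈ ℂ[t]` acts on `𝒢̂`
as `t̄`, which gives the diagonal entries `(−t, 1)`.
-/

open Polynomial in
theorem algebraMap_X_eq_tb : algebraMap ℂ[X] ANode X = tb := aeval_X tb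

theorem th1_sq : th1 ^ 2 = 0 := by
  rw [th1, ← map_pow, Ideal.Quotient.eq_zero_iff_mem]
  exact Ideal.subset_span (by simp)

section ZRing

local notation "π" => Ideal.Quotient.mk zIdeal

theorem mk_z1 : π z1 = -π tb := by
  rw [← map_neg, Ideal.Quotient.eq, sub_neg_eq_add]
  exact Ideal.subset_span (by simp)

theorem mk_z2 : π z2 = π tb :=
  Ideal.Quotient.eq.2 (Ideal.subset_span (by simp))

theorem mk_th2 : π th2 = -π th1 := by
  rw [← map_neg, Ideal.Quotient.eq, sub_neg_eq_add, add_comm]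
  exact Ideal.subset_span (by simp)

theorem mk_th1_sq : π th1 ^ 2 = 0 := by
  rw [← map_pow, th1_sq, map_zero]

theorem smul_eq_mk_mul (a : ANode) (q : ZRing) : a • q = π a * q := Algebra.smul_def a q

open Polynomial in
theorem X_smul_one : (X : ℂ[X]) • (1 : ZRing) = π tb := by
  -- `ℂ[t]` acts on `𝒢̂` through the quotient-module structure, not through `algebraMap`
  change π ((X : ℂ[X]) • (1 : ANode)) = π tb
  rw [Algebra.smul_def, mul_one, algebraMap_X_eq_tb]

def muFree : (Fin 3 → ANode) →ₗ[ANode] ZRing :=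
  (Pi.basisFun ANode (Fin 3)).constr ANode ![-π tb, π tb, π th1]

theorem muFree_ee (i : Fin 3) : muFree (ee i) = ![-π tb, π tb, π th1] i := by
  rw [ee, ← Pi.basisFun_apply, muFree, Module.Basis.constr_basis]

theorem omegaRelMod_le_ker_muFree : omegaRelMod ≤ LinearMap.ker muFree := by
  rw [omegaRelMod, Submodule.span_le]
  rintro v (rfl | rfl | rfl | rfl | rfl | rfl | rfl | rfl) <;>
    simp only [SetLike.mem_coe, LinearMap.mem_ker, map_add, map_sub, map_smul, muFree_ee,
      smul_eq_mk_mul, mk_z1, mk_z2, mk_th2, Matrix.cons_val_zero, Matrix.cons_val_one,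
      Matrix.cons_val_two, Matrix.tail_cons, Matrix.head_cons]
  iterate 6 ring
  · linear_combination mk_th1_sq
  · linear_combination -mk_th1_sq

def mu : M →ₗ[ANode] ZRing := omegaRelMod.liftQ muFree omegaRelMod_le_ker_muFree

theorem mu_s (i : Fin 3) : mu (s i) = ![-π tb, π tb, π th1] i := muFree_ee i

theorem secSub_le_ker_mu : secSub ≤ LinearMap.ker mu := by
  rw [secSub, Submodule.span_le, Set.singleton_subset_iff, SetLike.mem_coe, LinearMap.mem_ker,
    map_add, mu_s, mu_s]
  exact neg_add_cancel (π tb)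

end ZRing

/-- multiplication by `s₁` gives a well-defined `A`-linear map
`μ : M → A/(z̄₁+t̄, z̄₂−t̄, θ̄₁+θ̄₂)` with `s₁ ↦ −t̄`, `s₂ ↦ t̄`, `s₀ ↦ θ̄₁`; it kills
`A·(s₁+s₂)`, and the induced `ℂ[t]`-linear map on `M/A·(s₁+s₂)` is diagonal with
entries `(−t, 1)` in the bases `{s̄₁, s̄₀}` and `{1̄, θ̄₁}`. -/
theorem mult_by_s1_diagonal :
    ∃ μ : M →ₗ[ANode] ZRing,
      μ (s 0) = -(Ideal.Quotient.mk zIdeal tb) ∧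
      μ (s 1) = Ideal.Quotient.mk zIdeal tb ∧
      μ (s 2) = Ideal.Quotient.mk zIdeal th1 ∧
      Submodule.span ANode {s 0 + s 1} ≤ LinearMap.ker μ ∧
      ∃ μ' : (M ⧸ secSub) →ₗ[Polynomial ℂ] ZRing,
        (∀ m : M, μ' (Submodule.Quotient.mk m) = μ m) ∧
        μ' (Submodule.Quotient.mk (s 0)) = -((Polynomial.X : Polynomial ℂ) • (1 : ZRing)) ∧
        μ' (Submodule.Quotient.mk (s 2)) = (1 : Polynomial ℂ) • Ideal.Quotient.mk zIdeal th1 := by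
  refine ⟨mu, mu_s 0, mu_s 1, mu_s 2, secSub_le_ker_mu,
    (secSub.liftQ mu secSub_le_ker_mu).restrictScalars (Polynomial ℂ), fun _ => rfl, ?_, ?_⟩
  · rw [X_smul_one]
    exact mu_s 0
  · rw [one_smul]
    exact mu_s 2

end
end
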